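/- arXiv:1105.1257 — 5 statements merged into one kernel-verified Lean document; each statement's English description precedes it below -/
import Mathlib

section
/- Let μ be a probability measure, (L_λ)_{λ∈[a,b]} a family of probability densities with respect to μ that is uniformly integrable, and suppose λ ↦ f_λ is continuous in probability (with respect to μ) as a map into measurable functions, and λ ↦ U_λ are measurable maps with (U_λ)_*μ = L_λ·μ such that λ ↦ g∘U_λ is continuous in probability for every bounded continuous g. Then λ ↦ f_λ ∘ U_λ is continuous in probability. -/
/-!
Uniform integrability of the densities `L_λ` makes the pushforwards `(U_λ)_* μ` uniformly
absolutely continuous with respect to `μ`: a set of small `μ`-measure has uniformly small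
`μ`-measure when pulled back by any `U_λ`. Consequently `f_{λ_n} ∘ U_{λ_n}` is close in measure
to `f_λ ∘ U_{λ_n}`. Bounded continuous functions are dense in measure (truncate, then use their
density in `L¹` and Markov's inequality), so `f_λ` is uniformly close to a bounded continuous `g`
off a set of small measure; pulling back, `f_λ ∘ U_{λ_n}` and `f_λ ∘ U_λ` are close in measure
to `g ∘ U_{λ_n}` and `g ∘ U_λ`, and these converge by hypothesis.
-/

open MeasureTheory Filter
open scoped ENNReal Topology BoundedContinuousFunction

namespace MeasureTheory

section ConvergenceInMeasure

variable {α ι E : Type*} [MeasurableSpace α] {μ : Measure α} [PseudoEMetricSpace E] {l : Filter ι}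

theorem measure_edist_ge_add_le (f g h : α → E) (ε₁ ε₂ : ℝ≥0∞) :
    μ {x | ε₁ + ε₂ ≤ edist (f x) (h x)} ≤
      μ {x | ε₁ ≤ edist (f x) (g x)} + μ {x | ε₂ ≤ edist (g x) (h x)} := by
  refine (measure_mono fun x hx => ?_).trans (measure_union_le _ _)
  by_contra! hlt
  simp only [Set.mem_union, Set.mem_ofPred_eq, not_or, not_le] at hlt hx
  exact (hx.trans (edist_triangle _ _ _)).not_gt (ENNReal.add_lt_add hlt.1 hlt.2)

theorem TendstoInMeasure.of_tendsto_measure_edist_ge {f f' : ι → α → E} {g : α → E}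
    (hf' : TendstoInMeasure μ f' l g)
    (h : ∀ ε, 0 < ε → Tendsto (fun i => μ {x | ε ≤ edist (f i x) (f' i x)}) l (𝓝 0)) :
    TendstoInMeasure μ f l g := by
  intro ε hε
  have hε2 : 0 < ε / 2 := ENNReal.half_pos hε.ne'
  refine tendsto_of_tendsto_of_tendsto_of_le_of_le tendsto_const_nhds
    (by simpa using (h _ hε2).add (hf' _ hε2)) (fun _ => bot_le) fun i => ?_
  simpa only [ENNReal.add_halves] using
    measure_edist_ge_add_le (μ := μ) (f i) (f' i) g (ε / 2) (ε / 2)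

theorem tendstoInMeasure_of_forall_approx {f : ι → α → E} {g : α → E}
    (h : ∀ ε : ℝ≥0∞, 0 < ε → ∀ η : ℝ≥0∞, 0 < η → ∃ (f' : ι → α → E) (g' : α → E),
      TendstoInMeasure μ f' l g' ∧ (∀ᶠ i in l, μ {x | ε ≤ edist (f i x) (f' i x)} ≤ η) ∧
        μ {x | ε ≤ edist (g' x) (g x)} ≤ η) :
    TendstoInMeasure μ f l g := by
  intro ε hε
  refine ENNReal.tendsto_nhds_zero.2 fun η hη => ?_
  have hε3 : 0 < ε / 3 := ENNReal.div_pos hε.ne' (by simp)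
  have hη3 : 0 < η / 3 := ENNReal.div_pos hη.ne' (by simp)
  obtain ⟨f', g', hf', hff', hgg'⟩ := h _ hε3 _ hη3
  filter_upwards [hff', ENNReal.tendsto_nhds_zero.1 (hf' _ hε3) _ hη3] with i hi₁ hi₂
  calc μ {x | ε ≤ edist (f i x) (g x)}
      ≤ μ {x | ε / 3 ≤ edist (f i x) (f' i x)} + μ {x | ε / 3 ≤ edist (f' i x) (g' x)} +
          μ {x | ε / 3 ≤ edist (g' x) (g x)} := by
        simpa only [ENNReal.add_thirds] using
          (measure_edist_ge_add_le (f i) g' g (ε / 3 + ε / 3) (ε / 3)).trans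
            (add_le_add_left (measure_edist_ge_add_le (f i) (f' i) g' _ _) _)
    _ ≤ η / 3 + η / 3 + η / 3 := by gcongr
    _ = η := ENNReal.add_thirds η

end ConvergenceInMeasure

section UniformAbsoluteContinuity

variable {α β ι κ : Type*} [MeasurableSpace α] [MeasurableSpace β]

def UniformlyAbsolutelyContinuous (ν : ι → Measure α) (μ : Measure α) : Prop :=
  ∀ ε : ℝ≥0∞, 0 < ε → ∃ δ : ℝ≥0∞, 0 < δ ∧ ∀ i s, μ s ≤ δ → ν i s ≤ ε

theorem UniformlyAbsolutelyContinuous.comp {ν : ι → Measure α} {μ : Measure α}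
    (h : UniformlyAbsolutelyContinuous ν μ) (φ : κ → ι) :
    UniformlyAbsolutelyContinuous (fun k => ν (φ k)) μ :=
  fun ε hε => (h ε hε).imp fun _ hδ => ⟨hδ.1, fun k => hδ.2 (φ k)⟩

theorem UniformlyAbsolutelyContinuous.measure_preimage_le {μ : Measure α} {ν : Measure β}
    {V : ι → α → β} (h : UniformlyAbsolutelyContinuous (fun i => μ.map (V i)) ν)
    (hV : ∀ i, AEMeasurable (V i) μ) {ε : ℝ≥0∞} (hε : 0 < ε) :
    ∃ δ : ℝ≥0∞, 0 < δ ∧ ∀ i s, ν s ≤ δ → μ (V i ⁻¹' s) ≤ ε :=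
  (h ε hε).imp fun _ hδ =>
    ⟨hδ.1, fun i s hμs => (Measure.le_map_apply (hV i) s).trans (hδ.2 i s hμs)⟩

theorem integrable_of_isFiniteMeasure_withDensity_ofReal {μ : Measure α} {L : α → ℝ}
    (hL : AEStronglyMeasurable L μ) (hL_nonneg : 0 ≤ᵐ[μ] L)
    (h : IsFiniteMeasure (μ.withDensity fun x => ENNReal.ofReal (L x))) : Integrable L μ := by
  refine ⟨hL, (hasFiniteIntegral_iff_ofReal hL_nonneg).2 ?_⟩
  simpa [withDensity_apply _ MeasurableSet.univ] using
    measure_lt_top (μ.withDensity fun x => ENNReal.ofReal (L x)) Set.univ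

theorem uniformlyAbsolutelyContinuous_withDensity_ofReal {μ : Measure α} {L : ι → α → ℝ}
    (hL : ∀ i, Integrable (L i) μ) (hL_nonneg : ∀ i, 0 ≤ᵐ[μ] L i)
    (h : ∀ ε : ℝ, 0 < ε → ∃ δ : ℝ, 0 < δ ∧ ∀ i s, MeasurableSet s →
      μ s ≤ ENNReal.ofReal δ → ∫ x in s, L i x ∂μ ≤ ε) :
    UniformlyAbsolutelyContinuous (fun i => μ.withDensity fun x => ENNReal.ofReal (L i x)) μ := by
  intro ε hε
  obtain ⟨r, -, hr_pos, hr_le⟩ := ENNReal.lt_iff_exists_real_btwn.1 hε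
  obtain ⟨δ, hδ, hLδ⟩ := h r (ENNReal.ofReal_pos.1 hr_pos)
  refine ⟨ENNReal.ofReal δ, ENNReal.ofReal_pos.2 hδ, fun i s hμs => ?_⟩
  set t := toMeasurable μ s
  have ht : MeasurableSet t := measurableSet_toMeasurable μ s
  calc μ.withDensity (fun x => ENNReal.ofReal (L i x)) s
      ≤ μ.withDensity (fun x => ENNReal.ofReal (L i x)) t := measure_mono (subset_toMeasurable μ s)
    _ = ENNReal.ofReal (∫ x in t, L i x ∂μ) := by
        rw [withDensity_apply _ ht, ofReal_integral_eq_lintegral_ofReal (hL i).integrableOn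
          (ae_restrict_of_ae (hL_nonneg i))]
    _ ≤ ENNReal.ofReal r :=
        ENNReal.ofReal_le_ofReal (hLδ i t ht (by rwa [measure_toMeasurable]))
    _ ≤ ε := hr_le.le

theorem tendsto_measure_edist_comp_ge {E : Type*} [PseudoEMetricSpace E] {μ : Measure α}
    {ν : Measure β} {l : Filter ι} {V : ι → α → β} (hV : ∀ i, AEMeasurable (V i) μ)
    (hVν : UniformlyAbsolutelyContinuous (fun i => μ.map (V i)) ν) {F : ι → β → E} {G : β → E}
    (hF : TendstoInMeasure ν F l G) {ε : ℝ≥0∞} (hε : 0 < ε) :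
    Tendsto (fun i => μ {x | ε ≤ edist (F i (V i x)) (G (V i x))}) l (𝓝 0) := by
  refine ENNReal.tendsto_nhds_zero.2 fun η hη => ?_
  obtain ⟨δ, hδ, hV_le⟩ := hVν.measure_preimage_le hV hη
  filter_upwards [ENNReal.tendsto_nhds_zero.1 (hF ε hε) δ hδ] with i hi
  exact hV_le i _ hi

end UniformAbsoluteContinuity

section BoundedContinuousApproximation

variable {α E : Type*} [TopologicalSpace α] [NormalSpace α] [MeasurableSpace α] [BorelSpace α]
  {μ : Measure α} [μ.WeaklyRegular] [NormedAddCommGroup E] [NormedSpace ℝ E]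

theorem MemLp.exists_boundedContinuous_measure_edist_ge_le {f : α → E} (hf : MemLp f 1 μ)
    {ε η : ℝ≥0∞} (hε : 0 < ε) (hη : 0 < η) :
    ∃ g : α →ᵇ E, μ {x | ε ≤ edist (f x) (g x)} ≤ η := by
  obtain ⟨g, hg, hg_mem⟩ := hf.exists_boundedContinuous_eLpNorm_sub_le ENNReal.one_ne_top
    (ENNReal.mul_pos hε.ne' hη.ne').ne'
  refine ⟨g, ?_⟩
  have hmarkov := meas_ge_le_mul_pow_eLpNorm_enorm (μ := μ) one_ne_zero ENNReal.one_ne_top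
    (hf.1.sub hg_mem.1) hε.ne' (by simp)
  simp only [ENNReal.toReal_one, ENNReal.rpow_one, Pi.sub_apply, ← edist_eq_enorm_sub] at hmarkov
  calc μ {x | ε ≤ edist (f x) (g x)} ≤ ε⁻¹ * eLpNorm (f - ⇑g) 1 μ := hmarkov
    _ ≤ ε⁻¹ * (ε * η) := by gcongr
    _ ≤ η := by rw [← mul_assoc]; exact mul_le_of_le_one_left' (ENNReal.inv_mul_le_one ε)

theorem StronglyMeasurable.exists_boundedContinuous_measure_edist_ge_le [IsFiniteMeasure μ]
    {f : α → E} (hf : StronglyMeasurable f) {ε η : ℝ≥0∞} (hε : 0 < ε) (hη : 0 < η) :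
    ∃ g : α →ᵇ E, μ {x | ε ≤ edist (f x) (g x)} ≤ η := by
  set f' : ℕ → α → E := fun M => {x | ‖f x‖ ≤ M}.indicator f
  have hf'_meas (M : ℕ) : StronglyMeasurable (f' M) :=
    hf.indicator (_root_.measurableSet_le hf.norm.measurable measurable_const)
  have hf'_memLp (M : ℕ) : MemLp (f' M) 1 μ := by
    refine MemLp.of_bound (hf'_meas M).aestronglyMeasurable M (ae_of_all _ fun x => ?_)
    by_cases hx : ‖f x‖ ≤ M
    · simpa [f', Set.indicator_of_mem (show x ∈ {x | ‖f x‖ ≤ M} from hx)] using hx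
    · simp [f', Set.indicator_of_notMem (show x ∉ {x | ‖f x‖ ≤ M} from hx)]
  have hf'_lim : TendstoInMeasure μ f' atTop f := by
    refine tendstoInMeasure_of_tendsto_ae (fun M => (hf'_meas M).aestronglyMeasurable)
      (ae_of_all _ fun x => tendsto_const_nhds.congr' ?_)
    filter_upwards [eventually_ge_atTop ⌈‖f x‖⌉₊] with M hM
    exact (Set.indicator_of_mem (show x ∈ {x | ‖f x‖ ≤ (M : ℝ)} from Nat.ceil_le.1 hM) f).symm
  obtain ⟨M, hM⟩ := (ENNReal.tendsto_nhds_zero.1 (hf'_lim _ (ENNReal.half_pos hε.ne')) _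
    (ENNReal.half_pos hη.ne')).exists
  obtain ⟨g, hg⟩ := (hf'_memLp M).exists_boundedContinuous_measure_edist_ge_le
    (ENNReal.half_pos hε.ne') (ENNReal.half_pos hη.ne')
  refine ⟨g, ?_⟩
  calc μ {x | ε ≤ edist (f x) (g x)}
      ≤ μ {x | ε / 2 ≤ edist (f x) (f' M x)} + μ {x | ε / 2 ≤ edist (f' M x) (g x)} := by
        simpa only [ENNReal.add_halves] using measure_edist_ge_add_le f (f' M) g (ε / 2) (ε / 2)
    _ ≤ η / 2 + η / 2 := add_le_add (by simpa only [edist_comm] using hM) hg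
    _ = η := ENNReal.add_halves η

end BoundedContinuousApproximation

end MeasureTheory

/-- If `λ ↦ f_λ` is continuous in probability, the pushforward densities
`L_λ = d((U_λ)_*μ)/dμ`, `λ ∈ [a,b]`, form a uniformly integrable family, and
`λ ↦ g ∘ U_λ` is continuous in probability for every bounded continuous `g`,
then `λ ↦ f_λ ∘ U_λ` is continuous in probability. -/
theorem continuity_in_probability_of_composition
    {Ω : Type*} [TopologicalSpace Ω] [PolishSpace Ω] [MeasurableSpace Ω] [BorelSpace Ω]
    (μ : Measure Ω) [IsProbabilityMeasure μ] (a b : ℝ)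
    (f : ℝ → Ω → ℝ) (hfm : ∀ l, Measurable (f l))
    (U : ℝ → Ω → Ω) (hUm : ∀ l, Measurable (U l))
    (L : ℝ → Ω → ℝ) (hLm : ∀ l, Measurable (L l)) (hLnn : ∀ l ω, 0 ≤ L l ω)
    (hpush : ∀ l ∈ Set.Icc a b,
      Measure.map (U l) μ = μ.withDensity (fun ω => ENNReal.ofReal (L l ω)))
    -- uniform integrability of the family {L_λ : λ ∈ [a,b]}
    (hui : ∀ ε : ℝ, 0 < ε → ∃ δ : ℝ, 0 < δ ∧ ∀ l ∈ Set.Icc a b, ∀ s : Set Ω,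
      MeasurableSet s → μ s ≤ ENNReal.ofReal δ → ∫ ω in s, L l ω ∂μ ≤ ε)
    -- λ ↦ f_λ is continuous in probability
    (hfc : ∀ (l : ℝ) (lseq : ℕ → ℝ), (∀ n, lseq n ∈ Set.Icc a b) → l ∈ Set.Icc a b →
      Tendsto lseq atTop (nhds l) →
      TendstoInMeasure μ (fun n => f (lseq n)) atTop (f l))
    -- λ ↦ g ∘ U_λ is continuous in probability for all bounded continuous g
    (hgc : ∀ g : BoundedContinuousFunction Ω ℝ,
      ∀ (l : ℝ) (lseq : ℕ → ℝ), (∀ n, lseq n ∈ Set.Icc a b) → l ∈ Set.Icc a b →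
      Tendsto lseq atTop (nhds l) →
      TendstoInMeasure μ (fun n => g ∘ U (lseq n)) atTop (g ∘ U l)) :
    ∀ (l : ℝ) (lseq : ℕ → ℝ), (∀ n, lseq n ∈ Set.Icc a b) → l ∈ Set.Icc a b →
      Tendsto lseq atTop (nhds l) →
      TendstoInMeasure μ (fun n => f (lseq n) ∘ U (lseq n)) atTop (f l ∘ U l) := by
  intro l lseq hseq hl hlim
  have hU_meas (i : Set.Icc a b) : AEMeasurable (U i) μ := (hUm i).aemeasurable
  have hL_int (i : Set.Icc a b) : Integrable (L i) μ := by
    have := Measure.isProbabilityMeasure_map (hU_meas i)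
    exact integrable_of_isFiniteMeasure_withDensity_ofReal (hLm i).aestronglyMeasurable
      (ae_of_all _ (hLnn i)) (hpush i i.2 ▸ inferInstance)
  have hU : UniformlyAbsolutelyContinuous (fun i : Set.Icc a b => μ.map (U i)) μ := by
    simp_rw [fun i : Set.Icc a b => hpush i i.2]
    exact uniformlyAbsolutelyContinuous_withDensity_ofReal hL_int (fun i => ae_of_all _ (hLnn i))
      fun ε hε => (hui ε hε).imp fun _ hδ => ⟨hδ.1, fun i => hδ.2 i i.2⟩
  let k : ℕ → Set.Icc a b := fun n => ⟨lseq n, hseq n⟩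
  refine TendstoInMeasure.of_tendsto_measure_edist_ge (f' := fun n => f l ∘ U (lseq n)) ?_
    fun ε hε => tendsto_measure_edist_comp_ge (fun n => hU_meas (k n)) (hU.comp k)
      (hfc l lseq hseq hl hlim) hε
  refine tendstoInMeasure_of_forall_approx fun ε hε η hη => ?_
  obtain ⟨δ, hδ, hU_le⟩ := hU.measure_preimage_le hU_meas hη
  obtain ⟨g, hg⟩ := (hfm l).stronglyMeasurable.exists_boundedContinuous_measure_edist_ge_le
    (μ := μ) hε hδ
  exact ⟨fun n => g ∘ U (lseq n), g ∘ U l, hgc g l lseq hseq hl hlim,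
    .of_forall fun n => hU_le (k n) _ hg,
    hU_le ⟨l, hl⟩ {x | ε ≤ edist (g x) (f l x)} (by simpa only [edist_comm] using hg)⟩
end

section
/- Bayes-type disintegration: with γ = μ⊗ν, U : W×M → W measurable, dP/dγ = L, L̂(w) = ∫_M L(w,m)dν(m), for any bounded measurable g on W×M the conditional expectation of g given σ(U) under γ satisfies E_γ[g | U = x] = (1/L̂(x)) ∫_M L(x,m) E_μ[g(·,m) | U(·,m) = x] dν(m), for μ-almost every x. -/
/-! Writing `Ū p = (U p, p.2)`, the slice hypothesis says exactly that `Ū` pushes `γ = μ ⊗ ν`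
forward to `L • γ`. Hence for measurable `s` both `∫_s H L̂ dμ` and `∫_s ∫ L h dν dμ` are equal
to `∫_{U⁻¹ s} g dγ`: the first because `H ∘ U = E_γ[g | U]`, the second because
`h (U (·, m), m) = E_μ[g (·, m) | U (·, m)]` on each slice, followed by Fubini. Two integrable
functions with the same integral over every measurable set agree a.e. -/

open MeasureTheory
open scoped ENNReal

section PushforwardDensity

variable {α β : Type*} [MeasurableSpace α] [MeasurableSpace β] {μ : Measure α} {ρ : Measure β}
  {T : α → β} {ℓ : β → ℝ} {φ : β → ℝ}

theorem integrable_comp_iff_of_map_eq_withDensity (hT : Measurable T) (hℓ : Measurable ℓ)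
    (hℓnn : ∀ x, 0 ≤ ℓ x) (hmap : μ.map T = ρ.withDensity fun x => ENNReal.ofReal (ℓ x))
    (hφ : Measurable φ) :
    Integrable (fun w => φ (T w)) μ ↔ Integrable (fun x => ℓ x * φ x) ρ := by
  rw [← Function.comp_def, ← integrable_map_measure hφ.aestronglyMeasurable hT.aemeasurable, hmap,
    integrable_withDensity_iff_integrable_smul' hℓ.ennreal_ofReal
      (ae_of_all _ fun _ => ENNReal.ofReal_lt_top)]
  simp only [ENNReal.toReal_ofReal (hℓnn _), smul_eq_mul]

theorem setIntegral_comp_of_map_eq_withDensity (hT : Measurable T) (hℓ : Measurable ℓ)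
    (hℓnn : ∀ x, 0 ≤ ℓ x) (hmap : μ.map T = ρ.withDensity fun x => ENNReal.ofReal (ℓ x))
    (hφ : Measurable φ) {s : Set β} (hs : MeasurableSet s) :
    ∫ w in T ⁻¹' s, φ (T w) ∂μ = ∫ x in s, ℓ x * φ x ∂ρ := by
  rw [← setIntegral_map hs hφ.aestronglyMeasurable hT.aemeasurable, hmap, restrict_withDensity hs,
    integral_withDensity_eq_integral_toReal_smul hℓ.ennreal_ofReal
      (ae_of_all _ fun _ => ENNReal.ofReal_lt_top)]
  simp only [ENNReal.toReal_ofReal (hℓnn _), smul_eq_mul]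

end PushforwardDensity

theorem setIntegral_preimage_eq_of_ae_eq_condExp {α β : Type*} [MeasurableSpace α]
    [MeasurableSpace β] {μ : Measure α} [IsFiniteMeasure μ] {T : α → β} (hT : Measurable T)
    {f F : α → ℝ} (hf : Integrable f μ)
    (hF : F =ᵐ[μ] μ[f | MeasurableSpace.comap T inferInstance]) {s : Set β} (hs : MeasurableSet s) :
    ∫ x in T ⁻¹' s, F x ∂μ = ∫ x in T ⁻¹' s, f x ∂μ := by
  rw [integral_congr_ae (ae_restrict_of_ae hF)]
  exact setIntegral_condExp hT.comap_le hf ⟨s, hs, rfl⟩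

section Slices

variable {α β : Type*} [MeasurableSpace α] [MeasurableSpace β] {μ : Measure α} {ν : Measure β}
  [SFinite ν]

theorem Measure.map_prodMk_snd_eq_withDensity [SFinite μ] {T : α × β → α} (hT : Measurable T)
    {ℓ : α × β → ℝ≥0∞} (hℓ : Measurable ℓ)
    (hslice : ∀ᵐ b ∂ν, μ.map (fun a => T (a, b)) = μ.withDensity fun a => ℓ (a, b)) :
    (μ.prod ν).map (fun p => (T p, p.2)) = (μ.prod ν).withDensity ℓ := by
  ext S hS
  have hTS : MeasurableSet ((fun p => (T p, p.2)) ⁻¹' S) := (hT.prodMk measurable_snd) hS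
  rw [Measure.map_apply (hT.prodMk measurable_snd) hS, withDensity_apply _ hS,
    Measure.prod_apply_symm hTS, ← lintegral_indicator hS,
    lintegral_prod_symm _ (hℓ.indicator hS).aemeasurable]
  refine lintegral_congr_ae ?_
  filter_upwards [hslice] with b hb
  have hSb : MeasurableSet ((fun a => (a, b)) ⁻¹' S) := measurable_prodMk_right hS
  have hTb : Measurable fun a => T (a, b) := hT.comp measurable_prodMk_right
  change μ ((fun a => T (a, b)) ⁻¹' ((fun a => (a, b)) ⁻¹' S)) = _
  rw [← Measure.map_apply hTb hSb, hb, withDensity_apply _ hSb, ← lintegral_indicator hSb]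
  rfl

theorem setIntegral_prod_eq_integral_setIntegral_slice [SFinite μ] {E : Type*}
    [NormedAddCommGroup E] [NormedSpace ℝ E] {f : α × β → E} (hf : Integrable f (μ.prod ν))
    {S : Set (α × β)} (hS : MeasurableSet S) :
    ∫ p in S, f p ∂μ.prod ν = ∫ b, ∫ a in (fun a => (a, b)) ⁻¹' S, f (a, b) ∂μ ∂ν := by
  rw [← integral_indicator hS, integral_prod_symm _ (hf.indicator hS)]
  refine integral_congr_ae (ae_of_all _ fun b => ?_)
  dsimp only
  rw [← integral_indicator (measurable_prodMk_right hS)]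
  rfl

theorem integrable_of_ae_eq_condExp_slice [SFinite μ] {m : β → MeasurableSpace α}
    {f F : α × β → ℝ} (hf : Integrable f (μ.prod ν)) (hFm : AEStronglyMeasurable F (μ.prod ν))
    (hslice : ∀ᵐ b ∂ν, (fun a => F (a, b)) =ᵐ[μ] μ[fun a => f (a, b) | m b]) :
    Integrable F (μ.prod ν) := by
  refine (integrable_prod_iff' hFm).2 ⟨?_, ?_⟩
  · filter_upwards [hslice] with b hb
    exact integrable_condExp.congr hb.symm
  · refine hf.integral_norm_prod_right.mono' hFm.norm.prod_swap.integral_prod_right' ?_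
    filter_upwards [hslice] with b hb
    rw [Real.norm_of_nonneg (integral_nonneg fun _ => norm_nonneg _)]
    exact (integral_congr_ae (hb.fun_comp norm)).trans_le (integral_norm_condExp_le _)

theorem setIntegral_preimage_eq_of_ae_eq_condExp_slice [IsFiniteMeasure μ] {γ : Type*}
    [MeasurableSpace γ] {T : α × β → γ} (hT : Measurable T) {f F : α × β → ℝ}
    (hf : Integrable f (μ.prod ν)) (hF : Integrable F (μ.prod ν))
    (hslice : ∀ᵐ b ∂ν, (fun a => F (a, b))
      =ᵐ[μ] μ[fun a => f (a, b) | MeasurableSpace.comap (fun a => T (a, b)) inferInstance])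
    {s : Set γ} (hs : MeasurableSet s) :
    ∫ p in T ⁻¹' s, F p ∂μ.prod ν = ∫ p in T ⁻¹' s, f p ∂μ.prod ν := by
  rw [setIntegral_prod_eq_integral_setIntegral_slice hF (hT hs),
    setIntegral_prod_eq_integral_setIntegral_slice hf (hT hs)]
  refine integral_congr_ae ?_
  filter_upwards [hslice, hf.prod_left_ae] with b hb hfb
  exact setIntegral_preimage_eq_of_ae_eq_condExp (hT.comp measurable_prodMk_right) hfb hb hs

theorem integrable_integral_mul_of_map_eq_withDensity {U : α × β → α} (hU : Measurable U)
    {L : α × β → ℝ} (hL : Measurable L) (hLnn : ∀ p, 0 ≤ L p)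
    (hmap : (μ.prod ν).map (fun p => (U p, p.2))
      = (μ.prod ν).withDensity fun p => ENNReal.ofReal (L p))
    {f : α × β → ℝ} (hf : Measurable f) (hfU : Integrable (fun p => f (U p, p.2)) (μ.prod ν)) :
    Integrable (fun x => ∫ b, L (x, b) * f (x, b) ∂ν) μ :=
  ((integrable_comp_iff_of_map_eq_withDensity (hU.prodMk measurable_snd) hL hLnn hmap
    hf).1 hfU).integral_prod_left

theorem setIntegral_integral_mul_of_map_eq_withDensity [SFinite μ] {U : α × β → α}
    (hU : Measurable U) {L : α × β → ℝ} (hL : Measurable L) (hLnn : ∀ p, 0 ≤ L p)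
    (hmap : (μ.prod ν).map (fun p => (U p, p.2))
      = (μ.prod ν).withDensity fun p => ENNReal.ofReal (L p))
    {f : α × β → ℝ} (hf : Measurable f) (hfU : Integrable (fun p => f (U p, p.2)) (μ.prod ν))
    {s : Set α} (hs : MeasurableSet s) :
    ∫ x in s, ∫ b, L (x, b) * f (x, b) ∂ν ∂μ = ∫ p in U ⁻¹' s, f (U p, p.2) ∂μ.prod ν := by
  have hLf := (integrable_comp_iff_of_map_eq_withDensity (hU.prodMk measurable_snd) hL hLnn hmap
    hf).1 hfU
  have hfib := setIntegral_prod _ (s := s) (t := Set.univ) hLf.integrableOn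
  rw [Measure.restrict_univ] at hfib
  rw [← hfib, ← setIntegral_comp_of_map_eq_withDensity (hU.prodMk measurable_snd) hL hLnn hmap hf
    (hs.prod MeasurableSet.univ)]
  congr with p
  simp

end Slices

/-- Bayes-type disintegration on a product space: if `γ = μ ⊗ ν`, `dP/dγ = L`,
`L̂(x) = ∫ L(x,m) dν(m) > 0`, `h(x,m)` is the disintegration of `g(·,m)` w.r.t. the
partial map `U(·,m)` under `μ`, and `H` is the disintegration of `g` w.r.t. `U` under
`γ`, then  `H x = (1/L̂ x) ∫ L(x,m) h(x,m) dν(m)` for `μ`-a.e. `x`. -/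
theorem bayes_disintegration
    {W M : Type*} [MeasurableSpace W] [MeasurableSpace M]
    (μ : Measure W) (ν : Measure M) [IsProbabilityMeasure μ] [IsProbabilityMeasure ν]
    (U : W × M → W) (hU : Measurable U)
    (L : W × M → ℝ) (hLm : Measurable L) (hLnn : ∀ p, 0 ≤ L p)
    (hpart : ∀ᵐ m ∂ν, Measure.map (fun w => U (w, m)) μ
      = μ.withDensity (fun w => ENNReal.ofReal (L (w, m))))
    (Lhat : W → ℝ) (hLhat : ∀ x, Lhat x = ∫ m, L (x, m) ∂ν)
    (hLhatpos : ∀ᵐ x ∂μ, 0 < Lhat x)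
    (g : W × M → ℝ) (hg : Measurable g) (hgbd : ∃ C, ∀ p, |g p| ≤ C)
    -- h(x,m) : the regular conditional expectation E_μ[g(·,m) | U(·,m) = x]
    (h : W × M → ℝ) (hhm : Measurable h)
    (hdis : ∀ᵐ m ∂ν, (fun w => h (U (w, m), m))
      =ᵐ[μ] μ[(fun w => g (w, m)) | MeasurableSpace.comap (fun w => U (w, m)) inferInstance])
    -- H : the disintegration E_γ[g | U = x]
    (H : W → ℝ) (hHm : Measurable H)
    (hHdis : (fun p => H (U p))
      =ᵐ[μ.prod ν] (μ.prod ν)[g | MeasurableSpace.comap U inferInstance]) :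
    ∀ᵐ x ∂μ, H x = (1 / Lhat x) * ∫ m, L (x, m) * h (x, m) ∂ν := by
  obtain ⟨C, hC⟩ := hgbd
  set γ := μ.prod ν
  have hmap : γ.map (fun p => (U p, p.2)) = γ.withDensity fun p => ENNReal.ofReal (L p) :=
    Measure.map_prodMk_snd_eq_withDensity hU hLm.ennreal_ofReal hpart
  have hgint : Integrable g γ := .of_bound hg.aestronglyMeasurable C (ae_of_all _ hC)
  have hHU : Integrable (fun p => H (U p)) γ := integrable_condExp.congr hHdis.symm
  have hhU : Integrable (fun p => h (U p, p.2)) γ := integrable_of_ae_eq_condExp_slice hgint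
    (hhm.comp (hU.prodMk measurable_snd)).aestronglyMeasurable hdis
  have hLH (x : W) : ∫ m, L (x, m) * H x ∂ν = H x * Lhat x := by
    rw [integral_mul_const, hLhat, mul_comm]
  have hHL : Integrable (fun x => H x * Lhat x) μ :=
    (integrable_integral_mul_of_map_eq_withDensity hU hLm hLnn hmap (hHm.comp measurable_fst)
      hHU).congr (ae_of_all _ hLH)
  have hLh : Integrable (fun x => ∫ m, L (x, m) * h (x, m) ∂ν) μ :=
    integrable_integral_mul_of_map_eq_withDensity hU hLm hLnn hmap hhm hhU
  have hsets (s : Set W) (hs : MeasurableSet s) :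
      ∫ x in s, H x * Lhat x ∂μ = ∫ x in s, ∫ m, L (x, m) * h (x, m) ∂ν ∂μ :=
    calc ∫ x in s, H x * Lhat x ∂μ = ∫ x in s, ∫ m, L (x, m) * H x ∂ν ∂μ := by
          simp only [hLH]
      _ = ∫ p in U ⁻¹' s, H (U p) ∂γ :=
          setIntegral_integral_mul_of_map_eq_withDensity hU hLm hLnn hmap
            (hHm.comp measurable_fst) hHU hs
      _ = ∫ p in U ⁻¹' s, g p ∂γ := setIntegral_preimage_eq_of_ae_eq_condExp hU hgint hHdis hs
      _ = ∫ p in U ⁻¹' s, h (U p, p.2) ∂γ :=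
          (setIntegral_preimage_eq_of_ae_eq_condExp_slice hU hgint hhU hdis hs).symm
      _ = ∫ x in s, ∫ m, L (x, m) * h (x, m) ∂ν ∂μ :=
          (setIntegral_integral_mul_of_map_eq_withDensity hU hLm hLnn hmap hhm hhU hs).symm
  filter_upwards [Integrable.ae_eq_of_forall_setIntegral_eq _ _ hHL hLh fun s hs _ => hsets s hs,
    hLhatpos] with x hx hpos
  rw [← hx]
  field_simp
end

section
/- Let p > 1 and F ∈ L^p(μ). Suppose (U_λ)_{λ} are measurable maps with (U_λ)_*μ = L_λ·μ, L_λ > 0 μ-a.s., such that λ ↦ L_λ and λ ↦ L_λ^{-1} are continuous in probability with {L_λ} and {L_λ^{-1}·L_λ'} locally uniformly integrable, and λ ↦ f∘U_λ is continuous in L^q(μ) for every f ∈ L^{q'}(μ) with q' > q = p/(p−1). Then the map λ ↦ E[F | U_λ = x]·L_λ is weakly continuous in L^{p'}(μ) for every p' < p. -/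
open MeasureTheory Filter

/-! The pushforward density turns `∫ f · h_λ L_λ dμ` into `∫ (f ∘ U_λ)(h_λ ∘ U_λ) dμ`, and the
disintegration property turns it into `E[(f ∘ U_λ) · F]`. Hölder's inequality bounds the
variation in `λ` of the latter by `‖f ∘ U_λ - f ∘ U_λ₀‖_q ‖F‖_p`, which tends to zero. -/

open scoped ENNReal

theorem integral_mul_condExp_of_bound {α : Type*} {m m₀ : MeasurableSpace α} {μ : Measure α}
    [IsFiniteMeasure μ] (hm : m ≤ m₀) {g F : α → ℝ} (hg : StronglyMeasurable[m] g)
    (hF : Integrable F μ) (C : ℝ) (hgC : ∀ᵐ x ∂μ, ‖g x‖ ≤ C) :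
    ∫ x, g x * μ[F | m] x ∂μ = ∫ x, g x * F x ∂μ :=
  calc ∫ x, g x * μ[F | m] x ∂μ = ∫ x, μ[g * F | m] x ∂μ :=
        integral_congr_ae (condExp_stronglyMeasurable_mul_of_bound hm hg hF C hgC).symm
    _ = ∫ x, g x * F x ∂μ := integral_condExp hm

section Disintegration

variable {α β : Type*} [MeasurableSpace α] [mβ : MeasurableSpace β] {μ : Measure α}
  {ν : Measure β}

theorem integral_mul_density_eq_integral_comp {U : α → β} (hU : Measurable U) {L : β → ℝ}
    (hL : AEMeasurable L ν) (hL_nonneg : 0 ≤ᵐ[ν] L)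
    (hpush : μ.map U = ν.withDensity (fun y => ENNReal.ofReal (L y)))
    {g : β → ℝ} (hg : AEStronglyMeasurable g (μ.map U)) :
    ∫ y, g y * L y ∂ν = ∫ x, g (U x) ∂μ := by
  rw [← integral_map hU.aemeasurable hg, hpush]
  change _ = ∫ y, g y ∂ν.withDensity fun y => ((L y).toNNReal : ℝ≥0∞)
  rw [integral_withDensity_eq_integral_smul₀ hL.real_toNNReal]
  refine integral_congr_ae ?_
  filter_upwards [hL_nonneg] with y hy
  simp [NNReal.smul_def, Real.coe_toNNReal _ hy, mul_comm]

theorem integral_mul_disintegration_mul_density [IsFiniteMeasure μ] {U : α → β}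
    (hU : Measurable U) {L : β → ℝ} (hL : AEMeasurable L ν) (hL_nonneg : 0 ≤ᵐ[ν] L)
    (hpush : μ.map U = ν.withDensity (fun y => ENNReal.ofReal (L y)))
    {F : α → ℝ} (hF : Integrable F μ) {h : β → ℝ} (hh : Measurable h)
    (hdis : (fun x => h (U x)) =ᵐ[μ] μ[F | MeasurableSpace.comap U mβ])
    {f : β → ℝ} (hf : Measurable f) (C : ℝ) (hfC : ∀ y, ‖f y‖ ≤ C) :
    ∫ y, f y * (h y * L y) ∂ν = ∫ x, f (U x) * F x ∂μ := by
  have hfU : StronglyMeasurable[MeasurableSpace.comap U mβ] (fun x => f (U x)) :=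
    (hf.comp (comap_measurable U)).stronglyMeasurable
  simp_rw [← mul_assoc]
  rw [integral_mul_density_eq_integral_comp (g := fun y => f y * h y) hU hL hL_nonneg hpush
    (hf.mul hh).aestronglyMeasurable,
    ← integral_mul_condExp_of_bound hU.comap_le hfU hF C (ae_of_all _ fun x => hfC (U x))]
  exact integral_congr_ae (hdis.mono fun x hx => by simp only [hx])

end Disintegration

section Holder

variable {α : Type*} [MeasurableSpace α] {μ : Measure α} {p q : ℝ}

theorem norm_integral_mul_le_Lq_mul_Lp (hpq : p.HolderConjugate q) {G F : α → ℝ}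
    (hG : MemLp G (ENNReal.ofReal q) μ) (hF : MemLp F (ENNReal.ofReal p) μ) :
    ‖∫ x, G x * F x ∂μ‖ ≤ (∫ x, |G x| ^ q ∂μ) ^ (1 / q) * (∫ x, ‖F x‖ ^ p ∂μ) ^ (1 / p) :=
  calc ‖∫ x, G x * F x ∂μ‖ ≤ ∫ x, ‖G x‖ * ‖F x‖ ∂μ := by
        simpa only [norm_mul] using norm_integral_le_integral_norm (fun x => G x * F x)
    _ ≤ _ := integral_mul_norm_le_Lp_mul_Lq hpq.symm hG hF

theorem tendsto_integral_mul_of_tendsto_integral_rpow_sub (hpq : p.HolderConjugate q)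
    {ι : Type*} {l : Filter ι} {G : ι → α → ℝ} {G₀ F : α → ℝ}
    (hG : ∀ i, MemLp (G i) (ENNReal.ofReal q) μ) (hG₀ : MemLp G₀ (ENNReal.ofReal q) μ)
    (hF : MemLp F (ENNReal.ofReal p) μ)
    (hlim : Tendsto (fun i => ∫ x, |G i x - G₀ x| ^ q ∂μ) l (nhds 0)) :
    Tendsto (fun i => ∫ x, G i x * F x ∂μ) l (nhds (∫ x, G₀ x * F x ∂μ)) := by
  have := hpq.symm.ennrealOfReal
  have hint : ∀ {G' : α → ℝ}, MemLp G' (ENNReal.ofReal q) μ → Integrable (G' * F) μ :=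
    fun hG' => hG'.integrable_mul hF
  have hdiff : ∀ i, ∫ x, G i x * F x ∂μ - ∫ x, G₀ x * F x ∂μ
      = ∫ x, (G i x - G₀ x) * F x ∂μ := fun i => by
    simp_rw [sub_mul]
    exact (integral_sub (hint (hG i)) (hint hG₀)).symm
  have hnorm_lim : Tendsto (fun i => (∫ x, |G i x - G₀ x| ^ q ∂μ) ^ (1 / q)) l (nhds 0) := by
    simpa only [Real.zero_rpow hpq.symm.one_div_ne_zero] using
      hlim.rpow_const (p := 1 / q) (Or.inr hpq.symm.one_div_nonneg)
  rw [← tendsto_sub_nhds_zero_iff]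
  refine squeeze_zero_norm (fun i => ?_)
    (by simpa only [zero_mul] using hnorm_lim.mul_const ((∫ x, ‖F x‖ ^ p ∂μ) ^ (1 / p)))
  rw [hdiff]
  exact norm_integral_mul_le_Lq_mul_Lp hpq ((hG i).sub hG₀) hF

end Holder

theorem weak_continuity_disintegration_general
    {Ω : Type*} [TopologicalSpace Ω] [mΩ : MeasurableSpace Ω] [BorelSpace Ω]
    (μ : Measure Ω) [IsProbabilityMeasure μ]
    (p : ℝ) (hp : 1 < p) (q : ℝ) (hq : q = p / (p - 1))
    (F : Ω → ℝ) (hF : MemLp F (ENNReal.ofReal p) μ)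
    (U : ℝ → Ω → Ω) (hUm : ∀ l, Measurable (U l))
    (L : ℝ → Ω → ℝ) (hLm : ∀ l, Measurable (L l)) (hLpos : ∀ l, ∀ᵐ ω ∂μ, 0 < L l ω)
    (hpush : ∀ l, Measure.map (U l) μ = μ.withDensity (fun ω => ENNReal.ofReal (L l ω)))
    -- λ ↦ f ∘ U_λ is continuous in L^q for every f ∈ L^{q'}, q' > q
    (hUc : ∀ q' : ℝ, q < q' → ∀ f : Ω → ℝ, MemLp f (ENNReal.ofReal q') μ →
      ∀ (l : ℝ) (s : ℕ → ℝ), Tendsto s atTop (nhds l) →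
        Tendsto (fun n => ∫ ω, |f (U (s n) ω) - f (U l ω)| ^ q ∂μ) atTop (nhds 0))
    -- h_λ : the disintegration E[F | U_λ = x]
    (h : ℝ → Ω → ℝ) (hhm : ∀ l, Measurable (h l))
    (hdis : ∀ l, (fun ω => h l (U l ω))
      =ᵐ[μ] μ[F | MeasurableSpace.comap (U l) inferInstance]) :
    ∀ f : BoundedContinuousFunction Ω ℝ,
      Continuous (fun l : ℝ => ∫ x, f x * (h l x * L l x) ∂μ) := by
  intro f
  have hpq : p.HolderConjugate q := (Real.holderConjugate_iff_eq_conjExponent hp).2 hq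
  have key : ∀ l, ∫ x, f x * (h l x * L l x) ∂μ = ∫ ω, f (U l ω) * F ω ∂μ := fun l =>
    integral_mul_disintegration_mul_density (hUm l) (hLm l).aemeasurable
      ((hLpos l).mono fun _ hω => hω.le) (hpush l)
      (hF.integrable (ENNReal.one_le_ofReal.2 hp.le)) (hhm l) (hdis l)
      f.continuous.measurable ‖f‖ f.norm_coe_le_norm
  have hbdd : ∀ {g : Ω → ℝ} {r : ℝ≥0∞}, AEStronglyMeasurable g μ → (∀ ω, ‖g ω‖ ≤ ‖f‖) →
      MemLp g r μ := fun hg hgC => MemLp.of_bound hg ‖f‖ (ae_of_all _ hgC)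
  have hfU : ∀ l, MemLp (fun ω => f (U l ω)) (ENNReal.ofReal q) μ := fun l =>
    hbdd (f.continuous.measurable.comp (hUm l)).aestronglyMeasurable fun ω => f.norm_coe_le_norm _
  simp_rw [key]
  refine continuous_iff_seqContinuous.2 fun s l hs => ?_
  exact tendsto_integral_mul_of_tendsto_integral_rpow_sub hpq (fun n => hfU (s n)) (hfU l) hF
    (hUc (q + 1) (by linarith) f
      (hbdd f.continuous.measurable.aestronglyMeasurable f.norm_coe_le_norm) l s hs)

/-- Weak continuity of `λ ↦ E[F | U_λ = x]·L_λ`: under continuity in probability of the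
densities `L_λ` and of `λ ↦ f∘U_λ` in `L^q` for `f ∈ L^{q'}` (`q' > q = p/(p-1)`),
together with local uniform integrability, the map `λ ↦ h_λ L_λ` (`h_λ` the disintegration
of `F ∈ L^p`) is weakly continuous: `λ ↦ ∫ f · h_λ L_λ dμ` is continuous for every
bounded continuous `f`. -/
theorem weak_continuity_disintegration
    {Ω : Type*} [TopologicalSpace Ω] [mΩ : MeasurableSpace Ω] [BorelSpace Ω]
    (μ : Measure Ω) [IsProbabilityMeasure μ]
    (p : ℝ) (hp : 1 < p) (q : ℝ) (hq : q = p / (p - 1))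
    (F : Ω → ℝ) (hF : MemLp F (ENNReal.ofReal p) μ)
    (U : ℝ → Ω → Ω) (hUm : ∀ l, Measurable (U l))
    (L : ℝ → Ω → ℝ) (hLm : ∀ l, Measurable (L l)) (hLpos : ∀ l, ∀ᵐ ω ∂μ, 0 < L l ω)
    (hpush : ∀ l, Measure.map (U l) μ = μ.withDensity (fun ω => ENNReal.ofReal (L l ω)))
    -- λ ↦ L_λ and λ ↦ L_λ⁻¹ are continuous in probability
    (hLc : ∀ (l : ℝ) (s : ℕ → ℝ), Tendsto s atTop (nhds l) →
      TendstoInMeasure μ (fun n => L (s n)) atTop (L l))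
    (hLinvc : ∀ (l : ℝ) (s : ℕ → ℝ), Tendsto s atTop (nhds l) →
      TendstoInMeasure μ (fun n => fun ω => (L (s n) ω)⁻¹) atTop (fun ω => (L l ω)⁻¹))
    -- local uniform integrability of {L_λ} and {L_λ⁻¹ · L_{λ'}}
    (hui : ∀ a b : ℝ, ∀ ε : ℝ, 0 < ε → ∃ δ : ℝ, 0 < δ ∧ ∀ l ∈ Set.Icc a b,
      ∀ s : Set Ω, MeasurableSet s → μ s ≤ ENNReal.ofReal δ → ∫ ω in s, L l ω ∂μ ≤ ε)
    (hui' : ∀ a b : ℝ, ∀ ε : ℝ, 0 < ε → ∃ δ : ℝ, 0 < δ ∧ ∀ l ∈ Set.Icc a b, ∀ l' ∈ Set.Icc a b,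
      ∀ s : Set Ω, MeasurableSet s → μ s ≤ ENNReal.ofReal δ →
        ∫ ω in s, (L l ω)⁻¹ * L l' ω ∂μ ≤ ε)
    -- λ ↦ f ∘ U_λ is continuous in L^q for every f ∈ L^{q'}, q' > q
    (hUc : ∀ q' : ℝ, q < q' → ∀ f : Ω → ℝ, MemLp f (ENNReal.ofReal q') μ →
      ∀ (l : ℝ) (s : ℕ → ℝ), Tendsto s atTop (nhds l) →
        Tendsto (fun n => ∫ ω, |f (U (s n) ω) - f (U l ω)| ^ q ∂μ) atTop (nhds 0))
    -- h_λ : the disintegration E[F | U_λ = x]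
    (h : ℝ → Ω → ℝ) (hhm : ∀ l, Measurable (h l))
    (hdis : ∀ l, (fun ω => h l (U l ω))
      =ᵐ[μ] μ[F | MeasurableSpace.comap (U l) inferInstance]) :
    ∀ f : BoundedContinuousFunction Ω ℝ,
      Continuous (fun l : ℝ => ∫ x, f x * (h l x * L l x) ∂μ) :=
  weak_continuity_disintegration_general (mΩ := mΩ) μ p hp q hq F hF U hUm L hLm hLpos hpush hUc h
    hhm hdis
end

section
/- Let U_λ = I_W + λu with u ∈ L²_a(μ,H), suppose U_λ is μ-a.s. invertible for every λ < 1, the densities L_λ = d(U_λμ)/dμ converge in probability to L₁ as λ → 1, and the family {L_λ log L_λ : λ < 1} is uniformly integrable. Then E[L₁ log L₁] = (1/2)E[|u|²_H], and hence U₁ = I_W + u is μ-a.s. invertible. -/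
/-!
Along a sequence `λₙ ↑ 1` the entropies `E[L_{λₙ} log L_{λₙ}]` equal `λₙ²/2 · E[|u|²_H]`. Since the
`L_λ` are probability densities, Markov's inequality together with the uniform integrability of
`L_λ log L_λ` bounds these entropies in `L¹`, so Vitali's convergence theorem (along an a.e.
convergent subsequence) passes them to the limit `E[L₁ log L₁] = ½ E[|u|²_H]`, and the
converse criterion yields invertibility of `I_W + u`.
-/

open MeasureTheory Filter

noncomputable section

/-- Path space `W = C₀([0,1],ℝ^d)` modelled as functions `ℝ → ℝ^d` with the product
σ-algebra. -/
abbrev WPath (d : ℕ) := ℝ → EuclideanSpace ℝ (Fin d)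

/-- `μ`-a.s. invertibility of a map `T` on path space, with inverse having absolutely
continuous image measure. -/
def AlmostSurelyInvertible {d : ℕ} (μ : Measure (WPath d)) (T : WPath d → WPath d) : Prop :=
  ∃ V : WPath d → WPath d, Measurable V ∧ Measure.map V μ ≪ μ ∧
    ∀ᵐ w ∂μ, T (V w) = w ∧ V (T w) = w

open scoped ENNReal Topology

theorem Real.abs_mul_log_le_sq {x M : ℝ} (hx : 0 ≤ x) (hxM : x ≤ M) (hM : 1 ≤ M) :
    |x * Real.log x| ≤ M ^ 2 := by
  rcases le_or_gt x 1 with hx1 | hx1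
  · rcases hx.eq_or_lt with rfl | hx0
    · simp [sq_nonneg]
    · rw [mul_comm]
      nlinarith [Real.abs_log_mul_self_lt x hx0 hx1]
  · have hlog : Real.log x ≤ x - 1 := Real.log_le_sub_one_of_pos (by linarith)
    rw [abs_of_nonneg (mul_nonneg hx (Real.log_nonneg hx1.le))]
    nlinarith

namespace MeasureTheory

variable {α β ι : Type*} [MeasurableSpace α] {μ : Measure α}

theorem lintegral_eq_one_of_map_eq_withDensity [MeasurableSpace β] [IsProbabilityMeasure μ]
    {ν : Measure β} {T : α → β} (hT : Measurable T) {ρ : β → ℝ≥0∞}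
    (h : μ.map T = ν.withDensity ρ) : ∫⁻ y, ρ y ∂ν = 1 := by
  rw [← setLIntegral_univ, ← withDensity_apply _ .univ, ← h, Measure.map_apply hT .univ]
  exact measure_univ

/-- Bochner set integrals of `|f|` are junk-valued where `f` is not integrable, so the bound `c`
is first transferred to the truncations `A ∩ {|f| ≤ n}`, which exhaust `A`. -/
theorem setLIntegral_enorm_le_of_forall_setIntegral_abs_le [IsFiniteMeasure μ] {f : α → ℝ}
    (hf : Measurable f) {A : Set α} (hA : MeasurableSet A) {c : ℝ}
    (h : ∀ s ⊆ A, MeasurableSet s → ∫ x in s, |f x| ∂μ ≤ c) :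
    ∫⁻ x in A, ‖f x‖ₑ ∂μ ≤ ENNReal.ofReal c := by
  set s : ℕ → Set α := fun n => A ∩ {x | |f x| ≤ n}
  have hs : ∀ n, MeasurableSet (s n) := fun n =>
    hA.inter (measurableSet_le hf.abs measurable_const)
  have hmono : Monotone s := fun m n hmn =>
    Set.inter_subset_inter_right _ fun x (hx : |f x| ≤ m) =>
      show |f x| ≤ n from hx.trans (by exact_mod_cast hmn)
  have hunion : ⋃ n, s n = A := by
    refine Set.Subset.antisymm (Set.iUnion_subset fun n => Set.inter_subset_left) fun x hx => ?_
    obtain ⟨n, hn⟩ := exists_nat_ge |f x|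
    exact Set.mem_iUnion.2 ⟨n, hx, hn⟩
  rw [← hunion, setLIntegral_iUnion_of_directed _ hmono.directed_le]
  refine iSup_le fun n => ?_
  have hint : IntegrableOn f (s n) μ :=
    Measure.integrableOn_of_bounded (measure_ne_top μ _) hf.aestronglyMeasurable
      ((ae_restrict_iff' (hs n)).2 (ae_of_all _ fun x hx => hx.2))
  rw [← ofReal_integral_norm_eq_lintegral_enorm hint]
  exact ENNReal.ofReal_le_ofReal (h _ Set.inter_subset_left (hs n))

theorem unifIntegrable_of_forall_setIntegral_abs_le [IsFiniteMeasure μ] {f : ι → α → ℝ}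
    (hf : ∀ i, Measurable (f i))
    (h : ∀ ε : ℝ, 0 < ε → ∃ δ : ℝ, 0 < δ ∧ ∀ i s, MeasurableSet s → μ s ≤ ENNReal.ofReal δ →
      ∫ x in s, |f i x| ∂μ ≤ ε) :
    UnifIntegrable f 1 μ := by
  intro ε hε
  obtain ⟨δ, hδ, hδε⟩ := h ε hε
  refine ⟨δ, hδ, fun i s hs hμs => ?_⟩
  rw [eLpNorm_indicator_eq_eLpNorm_restrict hs, eLpNorm_one_eq_lintegral_enorm]
  exact setLIntegral_enorm_le_of_forall_setIntegral_abs_le (hf i) hs fun t hts ht =>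
    hδε i t ht ((measure_mono hts).trans hμs)

theorem tendsto_integral_of_uniformIntegrable_of_ae_tendsto [IsFiniteMeasure μ]
    {E : Type*} [NormedAddCommGroup E] [NormedSpace ℝ E] {f : ℕ → α → E} {g : α → E}
    (hf : UniformIntegrable f 1 μ) (hfg : ∀ᵐ x ∂μ, Tendsto (fun n => f n x) atTop (𝓝 (g x))) :
    Tendsto (fun n => ∫ x, f n x ∂μ) atTop (𝓝 (∫ x, g x ∂μ)) := by
  have hg : MemLp g 1 μ := hf.memLp_of_ae_tendsto hfg
  exact tendsto_integral_of_L1' g hg.1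
    (.of_forall fun n => memLp_one_iff_integrable.1 (hf.memLp n))
    (tendsto_Lp_finite_of_tendsto_ae le_rfl ENNReal.one_ne_top hf.1 hg hf.2.1 hfg)

theorem uniformIntegrable_mul_log [IsProbabilityMeasure μ] {L : ι → α → ℝ}
    (hL : ∀ i, Measurable (L i)) (hL0 : ∀ i, 0 ≤ L i)
    (hmass : ∀ i, ∫⁻ x, ENNReal.ofReal (L i x) ∂μ = 1)
    (hui : UnifIntegrable (fun i x => L i x * Real.log (L i x)) 1 μ) :
    UniformIntegrable (fun i x => L i x * Real.log (L i x)) 1 μ := by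
  have hF : ∀ i, AEStronglyMeasurable (fun x => L i x * Real.log (L i x)) μ := fun i =>
    ((hL i).mul (hL i).log).aestronglyMeasurable
  refine ⟨hF, hui, ?_⟩
  obtain ⟨δ, hδ, hδ1⟩ := hui one_pos
  set M : ℝ := max 1 δ⁻¹
  have hM : 0 < M := lt_of_lt_of_le one_pos (le_max_left _ _)
  refine ⟨(1 + M ^ 2).toNNReal, fun i => ?_⟩
  show _ ≤ ENNReal.ofReal (1 + M ^ 2)
  set F : α → ℝ := fun x => L i x * Real.log (L i x)
  set A : Set α := {x | ENNReal.ofReal M ≤ ENNReal.ofReal (L i x)}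
  have hA : MeasurableSet A := measurableSet_le measurable_const (hL i).ennreal_ofReal
  have hμA : μ A ≤ ENNReal.ofReal δ := calc
    μ A ≤ (∫⁻ x, ENNReal.ofReal (L i x) ∂μ) / ENNReal.ofReal M :=
      meas_ge_le_lintegral_div (hL i).ennreal_ofReal.aemeasurable (by simpa using hM)
        ENNReal.ofReal_ne_top
    _ = ENNReal.ofReal M⁻¹ := by rw [hmass, ENNReal.ofReal_inv_of_pos hM, one_div]
    _ ≤ ENNReal.ofReal δ := ENNReal.ofReal_le_ofReal (inv_le_of_inv_le₀ hδ (le_max_right _ _))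
  have hAc : ∀ᵐ x ∂μ, ‖Aᶜ.indicator F x‖ ≤ M ^ 2 := ae_of_all _ fun x => by
    by_cases hx : x ∈ A
    · simpa [hx] using sq_nonneg M
    · rw [Set.indicator_of_mem (Set.mem_compl hx), Real.norm_eq_abs]
      exact Real.abs_mul_log_le_sq (hL0 i x)
        (le_of_not_ge fun h => hx (ENNReal.ofReal_le_ofReal h)) (le_max_left _ _)
  calc eLpNorm F 1 μ = eLpNorm (A.indicator F + Aᶜ.indicator F) 1 μ := by
        rw [Set.indicator_self_add_compl]
    _ ≤ eLpNorm (A.indicator F) 1 μ + eLpNorm (Aᶜ.indicator F) 1 μ :=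
        eLpNorm_add_le ((hF i).indicator hA) ((hF i).indicator hA.compl) le_rfl
    _ ≤ ENNReal.ofReal 1 + ENNReal.ofReal (M ^ 2) := by
        gcongr
        · exact hδ1 i A hA hμA
        · simpa using eLpNorm_le_of_ae_bound hAc
    _ = ENNReal.ofReal (1 + M ^ 2) := (ENNReal.ofReal_add zero_le_one (sq_nonneg M)).symm

end MeasureTheory

theorem invertibility_by_limit_general
    (d : ℕ) (μ : Measure (WPath d)) [IsProbabilityMeasure μ]
    (en : WPath d → ℝ)
    -- U_λ = I_W + λ u
    (U : ℝ → WPath d → WPath d)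
    (hUmeas : ∀ l, Measurable (U l))
    (L : ℝ → WPath d → ℝ) (hLm : ∀ l, Measurable (L l)) (hLnn : ∀ l, 0 ≤ L l)
    (hpush : ∀ l ∈ Set.Icc (0:ℝ) 1,
      Measure.map (U l) μ = μ.withDensity (fun w => ENNReal.ofReal (L l w)))
    -- U_λ is a.s. invertible for λ < 1
    (hinv : ∀ l ∈ Set.Ico (0:ℝ) 1, AlmostSurelyInvertible μ (U l))
    -- for λ < 1, invertibility is equivalent to the entropy identity
    (hident : ∀ l ∈ Set.Ico (0:ℝ) 1, AlmostSurelyInvertible μ (U l) ↔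
      ∫ w, L l w * Real.log (L l w) ∂μ = (l ^ 2 / 2) * ∫ w, en w ∂μ)
    -- the converse criterion at λ = 1
    (hcrit : (∫ w, L 1 w * Real.log (L 1 w) ∂μ = (1 / 2) * ∫ w, en w ∂μ) →
      AlmostSurelyInvertible μ (U 1))
    -- L_λ → L₁ in probability as λ → 1⁻
    (hLconv : ∀ lseq : ℕ → ℝ, (∀ n, lseq n ∈ Set.Ico (0:ℝ) 1) →
      Tendsto lseq atTop (nhds 1) →
      TendstoInMeasure μ (fun n => L (lseq n)) atTop (L 1))
    -- {L_λ log L_λ : λ < 1} is uniformly integrable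
    (hui : ∀ ε : ℝ, 0 < ε → ∃ δ : ℝ, 0 < δ ∧ ∀ l ∈ Set.Ico (0:ℝ) 1,
      ∀ s : Set (WPath d), MeasurableSet s → μ s ≤ ENNReal.ofReal δ →
        ∫ w in s, |L l w * Real.log (L l w)| ∂μ ≤ ε) :
    (∫ w, L 1 w * Real.log (L 1 w) ∂μ = (1 / 2) * ∫ w, en w ∂μ)
    ∧ AlmostSurelyInvertible μ (U 1) := by
  obtain ⟨lseq, hlseq, hlim⟩ : ∃ lseq : ℕ → ℝ, (∀ n, lseq n ∈ Set.Ico (0:ℝ) 1) ∧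
      Tendsto lseq atTop (𝓝 1) :=
    mem_closure_iff_seq_limit.1 (by simp [closure_Ico (zero_ne_one' ℝ)])
  obtain ⟨ms, hms, hae⟩ := (hLconv lseq hlseq hlim).exists_seq_tendsto_ae
  set l : ℕ → ℝ := fun n => lseq (ms n)
  have hl : ∀ n, l n ∈ Set.Ico (0:ℝ) 1 := fun n => hlseq (ms n)
  have hUI : UniformIntegrable (fun n w => L (l n) w * Real.log (L (l n) w)) 1 μ :=
    uniformIntegrable_mul_log (fun n => hLm _) (fun n => hLnn _)
      (fun n => lintegral_eq_one_of_map_eq_withDensity (hUmeas _)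
        (hpush _ (Set.Ico_subset_Icc_self (hl n))))
      (unifIntegrable_of_forall_setIntegral_abs_le (fun n => (hLm _).mul (hLm _).log)
        fun ε hε => (hui ε hε).imp fun _ ⟨hδ, hδε⟩ => ⟨hδ, fun n => hδε _ (hl n)⟩)
  have hto_entropy := tendsto_integral_of_uniformIntegrable_of_ae_tendsto hUI
    (hae.mono fun w hw => (Real.continuous_mul_log.tendsto _).comp hw)
  have hto_energy : Tendsto (fun n => ∫ w, L (l n) w * Real.log (L (l n) w) ∂μ) atTop
      (𝓝 ((1:ℝ) ^ 2 / 2 * ∫ w, en w ∂μ)) := by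
    simp_rw [fun n => (hident _ (hl n)).1 (hinv _ (hl n))]
    exact (((hlim.comp hms.tendsto_atTop).pow 2).div_const 2).mul_const _
  have hentropy : ∫ w, L 1 w * Real.log (L 1 w) ∂μ = 1 / 2 * ∫ w, en w ∂μ := by
    simpa using tendsto_nhds_unique hto_entropy hto_energy
  exact ⟨hentropy, hcrit hentropy⟩

/-- **Theorem 4.2 of the paper.** Let `U_λ = I_W + λu`, `u ∈ L²_a(μ,H)`, with `U_λ`
a.s. invertible for `λ < 1` (equivalently `E[L_λ log L_λ] = (λ²/2)E[|u|²_H]`), the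
densities `L_λ` converging in probability to `L₁` as `λ → 1` and `{L_λ log L_λ : λ < 1}`
uniformly integrable.  Then `E[L₁ log L₁] = ½E[|u|²_H]` and hence `U₁ = I_W + u` is
a.s. invertible. -/
theorem invertibility_by_limit
    (d : ℕ) (μ : Measure (WPath d)) [IsProbabilityMeasure μ]
    (udot : ℝ → WPath d → EuclideanSpace ℝ (Fin d))
    (hum : Measurable (Function.uncurry udot))
    (en : WPath d → ℝ) (hen : ∀ w, en w = ∫ s in (0:ℝ)..1, ‖udot s w‖ ^ 2)
    (hu2 : Integrable en μ)
    -- U_λ = I_W + λ u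
    (U : ℝ → WPath d → WPath d)
    (hUdef : ∀ l w t, U l w t = w t + ∫ s in (0:ℝ)..t, l • udot s w)
    (hUmeas : ∀ l, Measurable (U l))
    (L : ℝ → WPath d → ℝ) (hLm : ∀ l, Measurable (L l)) (hLnn : ∀ l, 0 ≤ L l)
    (hpush : ∀ l ∈ Set.Icc (0:ℝ) 1,
      Measure.map (U l) μ = μ.withDensity (fun w => ENNReal.ofReal (L l w)))
    -- U_λ is a.s. invertible for λ < 1
    (hinv : ∀ l ∈ Set.Ico (0:ℝ) 1, AlmostSurelyInvertible μ (U l))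
    -- for λ < 1, invertibility is equivalent to the entropy identity
    (hident : ∀ l ∈ Set.Ico (0:ℝ) 1, AlmostSurelyInvertible μ (U l) ↔
      ∫ w, L l w * Real.log (L l w) ∂μ = (l ^ 2 / 2) * ∫ w, en w ∂μ)
    -- the converse criterion at λ = 1
    (hcrit : (∫ w, L 1 w * Real.log (L 1 w) ∂μ = (1 / 2) * ∫ w, en w ∂μ) →
      AlmostSurelyInvertible μ (U 1))
    -- L_λ → L₁ in probability as λ → 1⁻
    (hLconv : ∀ lseq : ℕ → ℝ, (∀ n, lseq n ∈ Set.Ico (0:ℝ) 1) →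
      Tendsto lseq atTop (nhds 1) →
      TendstoInMeasure μ (fun n => L (lseq n)) atTop (L 1))
    -- {L_λ log L_λ : λ < 1} is uniformly integrable
    (hui : ∀ ε : ℝ, 0 < ε → ∃ δ : ℝ, 0 < δ ∧ ∀ l ∈ Set.Ico (0:ℝ) 1,
      ∀ s : Set (WPath d), MeasurableSet s → μ s ≤ ENNReal.ofReal δ →
        ∫ w in s, |L l w * Real.log (L l w)| ∂μ ≤ ε) :
    (∫ w, L 1 w * Real.log (L 1 w) ∂μ = (1 / 2) * ∫ w, en w ∂μ)
    ∧ AlmostSurelyInvertible μ (U 1) :=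
  invertibility_by_limit_general d μ en U hUmeas L hLm hLnn hpush hinv hident hcrit hLconv hui
end
end

section
/- Entropy via Monge–Kantorovich transport: with L_λ log L_λ ∈ L¹(μ), let φ_λ ∈ D_{2,1} be the 1-convex transport potential with (I_W + ∇φ_λ)μ = L_λ·μ, and let Λ_λ = J(T_λ) exp(−½|∇φ_λ|²_H) satisfy Λ_λ · (L_λ∘T_λ) = 1 μ-a.s. Then E[L_λ log L_λ] = E[−log J(T_λ)] + (1/2) d_H(μ, L_λ·μ)², where d_H is the Cameron–Martin–Wasserstein distance; combined with E[L_λ log L_λ] = ½E∫_0^1|E[u̇_λ(s)|U_λ(s)]|²ds, the quadratic causal estimation error equals 2E[−log J(T_λ)] + d_H(μ,L_λ·μ)². -/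
open MeasureTheory

noncomputable section

/-- The filtration `(𝓤_t)` generated by the process `t ↦ U(t,·)`. -/
def filtOf (d : ℕ) (U : WPath d → WPath d) (t : ℝ) : MeasurableSpace (WPath d) :=
  ⨆ s : {s : ℝ // s ≤ t}, MeasurableSpace.comap (fun w : WPath d => U w s.1) inferInstance

/-- **Entropy via Monge–Kantorovich transport.** With `L_λ log L_λ ∈ L¹(μ)`,
`T_λ = I_W + ∇φ_λ` the transport map pushing `μ` to `L_λ·μ`,
`d_H(μ,L_λ·μ)² = E[|∇φ_λ|²_H]`, `Λ_λ = J(T_λ)exp(-½|∇φ_λ|²_H)` with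
`Λ_λ·(L_λ∘T_λ) = 1` a.s., one has
`E[L_λ log L_λ] = E[-log J(T_λ)] + ½ d_H(μ,L_λ·μ)²`; combined with
`E[L_λ log L_λ] = ½E∫₀¹|E[u̇_λ(s)|𝓤_λ(s)]|²ds`, the quadratic causal estimation error
equals `2E[-log J(T_λ)] + d_H(μ,L_λ·μ)²`. -/
theorem entropy_via_transport
    (d : ℕ) (μ : Measure (WPath d)) [IsProbabilityMeasure μ]
    (udot : ℝ → WPath d → EuclideanSpace ℝ (Fin d))
    (hum : Measurable (Function.uncurry udot))
    (U : WPath d → WPath d) (hUmeas : Measurable U)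
    (L : WPath d → ℝ) (hLm : Measurable L) (hLnn : 0 ≤ L)
    (hpush : Measure.map U μ = μ.withDensity (fun w => ENNReal.ofReal (L w)))
    (hLlogL : Integrable (fun w => L w * Real.log (L w)) μ)
    -- the squared Cameron–Martin norm (on H ⊂ W)
    (Hn : WPath d → ℝ) (hHnn : 0 ≤ Hn)
    -- the 1-convex transport potential: T = I_W + ∇φ pushes μ to L·μ
    (gradφ : WPath d → WPath d) (T : WPath d → WPath d)
    (hT : ∀ w, T w = w + gradφ w) (hTmeas : Measurable T)
    (hTpush : Measure.map T μ = μ.withDensity (fun w => ENNReal.ofReal (L w)))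
    -- d_H(μ, L·μ)² = E[|∇φ|²_H]
    (dHsq : ℝ) (hdH : dHsq = ∫ w, Hn (gradφ w) ∂μ)
    -- the normalized Jacobian determinant J(T) ∈ [0,1] and the non-causal Girsanov
    -- identity Λ·(L∘T) = 1 a.s., Λ = J(T)·exp(-½|∇φ|²_H)
    (J : WPath d → ℝ) (hJmeas : Measurable J) (hJ : ∀ w, J w ∈ Set.Icc (0:ℝ) 1)
    (Λ : WPath d → ℝ) (hΛdef : ∀ w, Λ w = J w * Real.exp (-(Hn (gradφ w)) / 2))
    (hΛrel : ∀ᵐ w ∂μ, Λ w * L (T w) = 1)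
    -- the causal estimation identity (Theorem 2.2)
    (hentropy : ∫ w, L w * Real.log (L w) ∂μ
      = (1 / 2) * ∫ w, (∫ s in (0:ℝ)..1, ‖(μ[udot s | filtOf d U s]) w‖ ^ 2) ∂μ) :
    (∫ w, L w * Real.log (L w) ∂μ
      = (∫ w, -Real.log (J w) ∂μ) + (1 / 2) * dHsq)
    ∧ (∫ w, (∫ s in (0:ℝ)..1, ‖(μ[udot s | filtOf d U s]) w‖ ^ 2) ∂μ
      = 2 * (∫ w, -Real.log (J w) ∂μ) + dHsq) := by
  -- rewrite the density as an ℝ≥0-valued function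
  have h1rw : (fun w => ENNReal.ofReal (L w)) = fun w => (Real.toNNReal (L w) : ENNReal) := by
    funext w; rfl
  have hlogLm : AEStronglyMeasurable (fun w => Real.log (L w)) (Measure.map T μ) :=
    (Real.measurable_log.comp hLm).aestronglyMeasurable
  -- a.e. identity: log (L (T w)) = -log (J w) + Hn (gradφ w) / 2
  have hlogT : ∀ᵐ w ∂μ, Real.log (L (T w)) = -Real.log (J w) + Hn (gradφ w) / 2 := by
    filter_upwards [hΛrel] with w hw
    have hΛ0 : Λ w ≠ 0 := by
      intro h; rw [h, zero_mul] at hw; exact one_ne_zero hw.symm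
    have hJ0 : J w ≠ 0 := by
      intro h; apply hΛ0; rw [hΛdef w, h, zero_mul]
    have hLT : L (T w) = (Λ w)⁻¹ := eq_inv_of_mul_eq_one_left (by rw [mul_comm]; exact hw)
    rw [hLT, Real.log_inv, hΛdef w, Real.log_mul hJ0 (Real.exp_ne_zero _), Real.log_exp]
    ring
  -- Integrable (log L) with respect to L·μ
  have hwdint : Integrable (fun w => Real.log (L w))
      (μ.withDensity fun w => ENNReal.ofReal (L w)) := by
    rw [h1rw, integrable_withDensity_iff_integrable_smul hLm.real_toNNReal]
    apply hLlogL.congr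
    filter_upwards with w
    simp [NNReal.smul_def, Real.coe_toNNReal _ (hLnn w)]
  -- Integrable (log (L ∘ T)) with respect to μ
  have hTint : Integrable (fun w => Real.log (L (T w))) μ := by
    have h := (integrable_map_measure hlogLm hTmeas.aemeasurable).mp (hTpush ▸ hwdint)
    exact h
  -- change of variables: ∫ log (L (T w)) dμ = ∫ L log L dμ
  have hval : ∫ w, Real.log (L (T w)) ∂μ = ∫ w, L w * Real.log (L w) ∂μ := by
    rw [← integral_map hTmeas.aemeasurable hlogLm, hTpush, h1rw,
      integral_withDensity_eq_integral_smul hLm.real_toNNReal]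
    congr 1; funext w
    simp [NNReal.smul_def, Real.coe_toNNReal _ (hLnn w)]
  -- Integrability of -log J
  have hlogJ_int : Integrable (fun w => -Real.log (J w)) μ := by
    refine hTint.norm.mono' (Real.measurable_log.comp hJmeas).neg.aestronglyMeasurable ?_
    filter_upwards [hlogT] with w hw
    have h1 : Real.log (J w) ≤ 0 := Real.log_nonpos (hJ w).1 (hJ w).2
    have h2 : (0:ℝ) ≤ Hn (gradφ w) := hHnn (gradφ w)
    rw [Real.norm_eq_abs, abs_of_nonneg (by linarith)]
    calc -Real.log (J w) ≤ Real.log (L (T w)) := by rw [hw]; linarith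
      _ ≤ ‖Real.log (L (T w))‖ := le_abs_self _
  have hlogJ_int' : Integrable (fun w => Real.log (J w)) μ := by
    have h := hlogJ_int.neg
    simp only [Pi.neg_def, neg_neg] at h
    exact h
  -- Integrability of Hn ∘ gradφ
  have hHn_ae : (fun w => Hn (gradφ w))
      =ᵐ[μ] fun w => 2 * (Real.log (L (T w)) + Real.log (J w)) := by
    filter_upwards [hlogT] with w hw; linarith [hw]
  have hHn_int : Integrable (fun w => Hn (gradφ w)) μ :=
    ((hTint.add hlogJ_int').const_mul 2).congr hHn_ae.symm
  -- main identity
  have hmain : ∫ w, L w * Real.log (L w) ∂μ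
      = (∫ w, -Real.log (J w) ∂μ) + (1 / 2) * dHsq := by
    rw [hdH, ← hval,
      integral_congr_ae (g := fun w => -Real.log (J w) + Hn (gradφ w) / 2) hlogT,
      integral_add hlogJ_int (hHn_int.div_const 2), integral_div]
    ring
  refine ⟨hmain, ?_⟩
  rw [hmain] at hentropy
  linarith [hentropy]
end
end
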